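/- arXiv:2410.18407 — 2 statements merged into one kernel-verified Lean document; each statement's English description precedes it below -/
import Mathlib

section
/- Let n ≥ 2 and p ≥ 0 an integer. There is a constant C(n,p) such that for all u ∈ l²(ℤⁿ): ‖u‖_{l^{4p+4}} ≤ ‖u‖_{l^{2n(p+1)/(n−1)}} ≤ C(n,p)·|u|_{1,2}^{1/(2p+2)}·‖u‖_{l^{4p+2}}^{(2p+1)/(2p+2)}. -/
open Finset

noncomputable section

/-- Vertices of the lattice graph `ℤⁿ`. -/
abbrev LV (n : ℕ) := Fin n → ℤ

/-- The set of neighbors of a vertex `x` in the lattice graph `ℤⁿ`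
(the points differing from `x` by `±1` in exactly one coordinate). -/
def latNbrs {n : ℕ} (x : LV n) : Finset (LV n) :=
  Finset.image (fun p : Fin n × Bool =>
    Function.update x p.1 (x p.1 + (if p.2 then 1 else -1))) Finset.univ

/-- The graph Laplacian on `ℤⁿ`: `Δu(x) = Σ_{y∼x} (u(y) - u(x))`. -/
def latLap {n : ℕ} (u : LV n → ℝ) (x : LV n) : ℝ :=
  ∑ y ∈ latNbrs x, (u y - u x)

/-- The boundary `∂Ω = {y ∉ Ω : ∃ x ∈ Ω, y ∼ x}` of a finite set `Ω ⊂ ℤⁿ`. -/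
def latBdry {n : ℕ} (Ω : Finset (LV n)) : Finset (LV n) :=
  Ω.biUnion latNbrs \ Ω

/-- The closure `Ω̄ = Ω ∪ ∂Ω`. -/
def latClosure {n : ℕ} (Ω : Finset (LV n)) : Finset (LV n) :=
  Ω ∪ latBdry Ω

/-- The bilinear Dirichlet form
`E_Ω(u,v) = (1/2) Σ_{x,y ∈ Ω̄, x∼y} (u(y)-u(x))(v(y)-v(x))`. -/
def latEnergy {n : ℕ} (Ω : Finset (LV n)) (u v : LV n → ℝ) : ℝ :=
  (1 / 2) * ∑ x ∈ latClosure Ω, ∑ y ∈ latNbrs x ∩ latClosure Ω,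
    (u y - u x) * (v y - v x)

/-- The source term `h = 4π Σ_{j=1}^M n_j δ_{p_j}`. -/
def chernH {n M : ℕ} (nj : Fin M → ℕ) (pts : Fin M → LV n) (x : LV n) : ℝ :=
  4 * Real.pi * ∑ j, (nj j : ℝ) * (if x = pts j then 1 else 0)

/-- The `l^r` norm `(Σ_{x∈ℤⁿ} |u(x)|^r)^{1/r}` with respect to counting measure. -/
def lnorm {n : ℕ} (u : LV n → ℝ) (r : ℝ) : ℝ :=
  (∑' x : LV n, |u x| ^ r) ^ (1 / r)

/-- The discrete `W^{1,q}` gradient seminorm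
`|u|_{1,q} = (Σ_{x∈ℤⁿ} Σ_{y∼x} |u(y)-u(x)|^q)^{1/q}`. -/
def semiNorm1 {n : ℕ} (u : LV n → ℝ) (q : ℝ) : ℝ :=
  (∑' x : LV n, ∑ y ∈ latNbrs x, |u y - u x| ^ q) ^ (1 / q)

/-!
Put `W = |u|^(2p+2)`. Since `W` vanishes at infinity, `W x` is bounded by the sum of the
differences of `W` along each coordinate line through `x`; feeding these `n` bounds into the
Gagliardo–Nirenberg product inequality for counting measure gives the `ℓ¹` Sobolev inequality
`‖W‖_{n/(n-1)} ≤ Σₓ Σ_{y∼x} |W y - W x|`. The bound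
`|a^m - b^m| ≤ m (|a|^(m-1) + |b|^(m-1)) |a - b|` and Cauchy–Schwarz turn the right-hand side into
`(2p+2) (8n Σ|u|^(4p+2))^(1/2) |u|_{1,2}`, and taking `(2p+2)`-th roots gives the second
inequality. The first one is the monotonicity of `ℓ^r` norms in `r`. All estimates are carried out
in `ℝ≥0∞`, where no summability side conditions arise.
-/

open Filter Topology MeasureTheory
open scoped ENNReal

namespace ENNReal

lemma rpow_eq_mul_rpow_sub_one (x : ℝ≥0∞) {m : ℝ} (hm : 1 ≤ m) : x ^ m = x * x ^ (m - 1) := by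
  conv_rhs => enter [1]; rw [← ENNReal.rpow_one x]
  rw [← ENNReal.rpow_add_of_nonneg _ _ zero_le_one (by linarith), add_sub_cancel]

theorem tsum_rpow_le_rpow_tsum {α : Type*} (f : α → ℝ≥0∞) {m : ℝ} (hm : 1 ≤ m) :
    ∑' x, f x ^ m ≤ (∑' x, f x) ^ m := by
  have hle (x : α) : f x ^ m ≤ f x * (∑' y, f y) ^ (m - 1) := by
    rw [rpow_eq_mul_rpow_sub_one _ hm]
    gcongr
    exact ENNReal.le_tsum x
  calc ∑' x, f x ^ m ≤ ∑' x, f x * (∑' y, f y) ^ (m - 1) := ENNReal.tsum_le_tsum hle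
    _ = (∑' x, f x) ^ m := by rw [ENNReal.tsum_mul_right, ← rpow_eq_mul_rpow_sub_one _ hm]

theorem tsum_rpow_one_div_le_of_exponent_le {α : Type*} (f : α → ℝ≥0∞) {a b : ℝ} (ha : 0 < a)
    (hab : a ≤ b) : (∑' x, f x ^ b) ^ (1 / b) ≤ (∑' x, f x ^ a) ^ (1 / a) := by
  have hb : 0 < b := ha.trans_le hab
  calc (∑' x, f x ^ b) ^ (1 / b) = (∑' x, (f x ^ a) ^ (b / a)) ^ (1 / b) := by
        simp_rw [← ENNReal.rpow_mul, mul_div_cancel₀ b ha.ne']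
    _ ≤ ((∑' x, f x ^ a) ^ (b / a)) ^ (1 / b) := by
        gcongr
        exact tsum_rpow_le_rpow_tsum _ ((one_le_div ha).2 hab)
    _ = (∑' x, f x ^ a) ^ (1 / a) := by
        rw [← ENNReal.rpow_mul]
        congr 1
        field_simp

theorem inner_le_Lp_mul_Lq_tsum {ι : Type*} [Countable ι] {p q : ℝ}
    (hpq : p.HolderConjugate q) (f g : ι → ℝ≥0∞) :
    ∑' i, f i * g i ≤ (∑' i, f i ^ p) ^ (1 / p) * (∑' i, g i ^ q) ^ (1 / q) := by
  let _ : MeasurableSpace ι := ⊤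
  simpa only [Pi.mul_apply, lintegral_count] using
    ENNReal.lintegral_mul_le_Lp_mul_Lq Measure.count hpq
      (measurable_of_countable f).aemeasurable (measurable_of_countable g).aemeasurable

end ENNReal

theorem MeasureTheory.Measure.pi_count {ι : Type*} [Fintype ι] {α : ι → Type*}
    [∀ i, MeasurableSpace (α i)] [∀ i, MeasurableSingletonClass (α i)] [∀ i, Countable (α i)] :
    Measure.pi (fun i => (Measure.count : Measure (α i))) = Measure.count := by
  refine Measure.ext_of_singleton fun x => ?_
  rw [Measure.count_singleton, ← Set.univ_pi_singleton, Measure.pi_pi]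
  simp

theorem summable_abs_rpow_of_summable_sq {α : Type*} {u : α → ℝ}
    (hu : Summable fun x => u x ^ 2) {a : ℝ} (ha : 2 ≤ a) : Summable fun x => |u x| ^ a := by
  have h2 : Memℓp u 2 := (memℓp_gen_iff (by norm_num)).2 (by simpa using hu)
  have := (memℓp_gen_iff (by rw [ENNReal.toReal_ofReal (by linarith)]; linarith)).1
    (h2.of_exponent_ge (p := ENNReal.ofReal a)
      (by rw [← ENNReal.ofReal_ofNat 2]; exact ENNReal.ofReal_le_ofReal ha))
  simpa [ENNReal.toReal_ofReal (by linarith : (0 : ℝ) ≤ a)] using this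

theorem tendsto_cofinite_zero_of_summable_sq {α : Type*} {u : α → ℝ}
    (hu : Summable fun x => u x ^ 2) : Tendsto u cofinite (𝓝 0) := by
  have := (Real.continuous_sqrt.tendsto' 0 0 Real.sqrt_zero).comp hu.tendsto_cofinite_zero
  rw [tendsto_zero_iff_abs_tendsto_zero]
  simpa [Function.comp_def, Real.sqrt_sq_eq_abs] using this

theorem enorm_le_tsum_enorm_sub_of_tendsto {f : ℤ → ℝ} (hf : Tendsto f atTop (𝓝 0)) (s : ℤ) :
    ‖f s‖ₑ ≤ ∑' t, ‖f (t + 1) - f t‖ₑ := by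
  set g : ℕ → ℝ := fun k => f (s + k)
  have hpartial (T : ℕ) : ‖f s‖ₑ ≤ (∑' t, ‖f (t + 1) - f t‖ₑ) + ‖g T‖ₑ := by
    have htele : g T - g 0 = ∑ k ∈ range T, (f (s + k + 1) - f (s + k)) := by
      rw [← Finset.sum_range_sub]
      simp [g, add_assoc]
    calc ‖f s‖ₑ = ‖g T - (g T - g 0)‖ₑ := by simp [g]
      _ ≤ ‖g T - g 0‖ₑ + ‖g T‖ₑ := by rw [add_comm]; exact enorm_sub_le
      _ ≤ ∑ k ∈ range T, ‖f (s + k + 1) - f (s + k)‖ₑ + ‖g T‖ₑ := by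
          rw [htele]; gcongr; exact enorm_sum_le _ _
      _ ≤ (∑' t, ‖f (t + 1) - f t‖ₑ) + ‖g T‖ₑ := by
          gcongr
          exact (Finset.sum_map (range T) ⟨fun k : ℕ => s + k,
            (add_right_injective s).comp Nat.cast_injective⟩ (fun t => ‖f (t + 1) - f t‖ₑ)).symm.le
            |>.trans (ENNReal.sum_le_tsum _)
  have hg : Tendsto (fun T => ‖g T‖ₑ) atTop (𝓝 0) := by
    have : Tendsto g atTop (𝓝 0) :=
      hf.comp (tendsto_atTop_add_const_left _ s tendsto_natCast_atTop_atTop)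
    simpa [Function.comp_def] using (continuous_enorm.tendsto 0).comp this
  simpa using ge_of_tendsto (tendsto_const_nhds.add hg) (Eventually.of_forall hpartial)

theorem abs_pow_succ_sub_pow_succ_le (a b : ℝ) (k : ℕ) :
    |a ^ (k + 1) - b ^ (k + 1)| ≤ (k + 1) * (|a| ^ k + |b| ^ k) * |a - b| := by
  have hmax : max |a| |b| ^ k ≤ |a| ^ k + |b| ^ k := by
    rcases le_total |a| |b| with h | h
    · rw [max_eq_right h]; exact le_add_of_nonneg_left (by positivity)
    · rw [max_eq_left h]; exact le_add_of_nonneg_right (by positivity)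
  calc |a ^ (k + 1) - b ^ (k + 1)| ≤ |a - b| * (k + 1 : ℕ) * max |a| |b| ^ k :=
        abs_pow_sub_pow_le a b (k + 1)
    _ ≤ |a - b| * (k + 1 : ℕ) * (|a| ^ k + |b| ^ k) := by gcongr
    _ = _ := by push_cast; ring

theorem enorm_abs_pow_succ_sub_le (a b : ℝ) (k : ℕ) :
    ‖|a| ^ (k + 1) - |b| ^ (k + 1)‖ₑ ≤ (k + 1) * (‖a‖ₑ ^ k + ‖b‖ₑ ^ k) * ‖a - b‖ₑ := by
  have h : ‖|a| ^ (k + 1) - |b| ^ (k + 1)‖₊ ≤ (k + 1) * (‖a‖₊ ^ k + ‖b‖₊ ^ k) * ‖a - b‖₊ := by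
    rw [← NNReal.coe_le_coe]
    push_cast
    simp only [Real.norm_eq_abs]
    calc _ ≤ (k + 1) * (|a| ^ k + |b| ^ k) * |(|a| - |b|)| := by
          simpa using abs_pow_succ_sub_pow_succ_le |a| |b| k
      _ ≤ _ := mul_le_mul_of_nonneg_left (abs_abs_sub_abs_le_abs_sub a b) (by positivity)
  simp only [enorm_eq_nnnorm]
  exact_mod_cast h

section Lattice

variable {n : ℕ}

def latShift (q : Fin n × Bool) : LV n := Pi.single q.1 (if q.2 then 1 else -1)

lemma update_eq_add_latShift (x : LV n) (q : Fin n × Bool) :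
    Function.update x q.1 (x q.1 + (if q.2 then 1 else -1)) = x + latShift q := by
  ext j
  rcases eq_or_ne j q.1 with rfl | h <;> simp [latShift, *]

lemma latShift_injective : Function.Injective (latShift (n := n)) := by
  rintro ⟨i, b⟩ ⟨j, c⟩ h
  have hi := congrFun h i
  rcases eq_or_ne i j with rfl | hij
  · cases b <;> cases c <;> simp_all [latShift]
  · cases b <;> simp [latShift, hij] at hi

lemma latNbrs_eq_image (x : LV n) : latNbrs x = univ.image (fun q => x + latShift q) := by
  simp only [latNbrs, update_eq_add_latShift]

lemma add_latShift_mem_latNbrs (x : LV n) (q : Fin n × Bool) : x + latShift q ∈ latNbrs x := by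
  rw [latNbrs_eq_image]
  exact mem_image_of_mem _ (mem_univ q)

lemma sum_latNbrs {M : Type*} [AddCommMonoid M] (x : LV n) (f : LV n → M) :
    ∑ y ∈ latNbrs x, f y = ∑ q, f (x + latShift q) := by
  rw [latNbrs_eq_image, sum_image fun _ _ _ _ h => latShift_injective (add_left_cancel h)]

def latGrad (W : LV n → ℝ) (x : LV n) : ℝ≥0∞ := ∑ y ∈ latNbrs x, ‖W y - W x‖ₑ

lemma enorm_le_tsum_latGrad_update {W : LV n → ℝ} (hW : Tendsto W cofinite (𝓝 0)) (x : LV n)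
    (i : Fin n) : ‖W x‖ₑ ≤ ∑' t : ℤ, latGrad W (Function.update x i t) := by
  have hline : Tendsto (fun t : ℤ => W (Function.update x i t)) atTop (𝓝 0) :=
    (hW.comp (Function.update_injective x i).tendsto_cofinite).mono_left atTop_le_cofinite
  have hstep (t : ℤ) : ‖W (Function.update x i (t + 1)) - W (Function.update x i t)‖ₑ
      ≤ latGrad W (Function.update x i t) := by
    have hnbr : Function.update x i (t + 1) = Function.update x i t + latShift (i, true) := by
      simpa using update_eq_add_latShift (Function.update x i t) (i, true)
    rw [hnbr]
    exact single_le_sum (f := fun y => ‖W y - W _‖ₑ) (fun _ _ => zero_le)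
      (add_latShift_mem_latNbrs _ _)
  calc ‖W x‖ₑ = ‖W (Function.update x i (x i))‖ₑ := by rw [Function.update_eq_self]
    _ ≤ _ := enorm_le_tsum_enorm_sub_of_tendsto hline (x i)
    _ ≤ _ := ENNReal.tsum_le_tsum hstep

theorem tsum_enorm_rpow_le_tsum_latGrad_rpow (hn : 2 ≤ n) {W : LV n → ℝ}
    (hW : Tendsto W cofinite (𝓝 0)) :
    ∑' x, ‖W x‖ₑ ^ ((n : ℝ) / (n - 1)) ≤ (∑' x, latGrad W x) ^ ((n : ℝ) / (n - 1)) := by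
  have hn1 : (1 : ℝ) < n := by exact_mod_cast hn
  have hconj : Real.HolderConjugate (Fintype.card (Fin n) : ℝ) ((n : ℝ) / (n - 1)) := by
    rw [Fintype.card_fin]
    exact Real.HolderConjugate.conjExponent hn1
  have H := lintegral_prod_lintegral_pow_le (fun _ : Fin n => Measure.count) hconj
    (measurable_of_countable (latGrad W))
  simp only [Measure.pi_count, lintegral_count, Fintype.card_fin] at H
  refine le_trans (ENNReal.tsum_le_tsum fun x => ?_) H
  calc ‖W x‖ₑ ^ ((n : ℝ) / (n - 1)) = ∏ _i : Fin n, ‖W x‖ₑ ^ (1 / ((n : ℝ) - 1)) := by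
        rw [prod_const, card_univ, Fintype.card_fin, ← ENNReal.rpow_natCast, ← ENNReal.rpow_mul]
        congr 1
        field_simp
    _ ≤ _ := prod_le_prod' fun i _ => by
        gcongr
        exact enorm_le_tsum_latGrad_update hW x i

theorem tsum_latGrad_abs_pow_le (u : LV n → ℝ) (k : ℕ) :
    ∑' x, latGrad (fun z => |u z| ^ (k + 1)) x ≤
      (k + 1) * (8 * n * ∑' x, ‖u x‖ₑ ^ (2 * k)) ^ (1 / 2 : ℝ) *
        (∑' x, ∑ y ∈ latNbrs x, ‖u y - u x‖ₑ ^ (2 : ℝ)) ^ (1 / 2 : ℝ) := by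
  set A : LV n × (Fin n × Bool) → ℝ≥0∞ := fun z => ‖u (z.1 + latShift z.2)‖ₑ ^ k + ‖u z.1‖ₑ ^ k
  set B : LV n × (Fin n × Bool) → ℝ≥0∞ := fun z => ‖u (z.1 + latShift z.2) - u z.1‖ₑ
  have hA : ∑' z, A z ^ (2 : ℝ) ≤ 8 * n * ∑' x, ‖u x‖ₑ ^ (2 * k) := by
    have hpt (z : LV n × (Fin n × Bool)) :
        A z ^ (2 : ℝ) ≤ 2 * (‖u (z.1 + latShift z.2)‖ₑ ^ (2 * k) + ‖u z.1‖ₑ ^ (2 * k)) := by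
      have := ENNReal.rpow_add_le_mul_rpow_add_rpow (‖u (z.1 + latShift z.2)‖ₑ ^ k)
        (‖u z.1‖ₑ ^ k) one_le_two
      norm_num [A, ← pow_mul, mul_comm k] at this ⊢
      exact this
    have hshift (q : Fin n × Bool) :
        ∑' x, ‖u (x + latShift q)‖ₑ ^ (2 * k) = ∑' x, ‖u x‖ₑ ^ (2 * k) :=
      (Equiv.addRight (latShift q)).tsum_eq (fun x => ‖u x‖ₑ ^ (2 * k))
    calc ∑' z, A z ^ (2 : ℝ)
        ≤ ∑' z : LV n × (Fin n × Bool),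
            2 * (‖u (z.1 + latShift z.2)‖ₑ ^ (2 * k) + ‖u z.1‖ₑ ^ (2 * k)) :=
          ENNReal.tsum_le_tsum hpt
      _ = ∑' q : Fin n × Bool, ∑' x,
            2 * (‖u (x + latShift q)‖ₑ ^ (2 * k) + ‖u x‖ₑ ^ (2 * k)) := by
          rw [ENNReal.tsum_prod', ENNReal.tsum_comm]
      _ = 8 * n * ∑' x, ‖u x‖ₑ ^ (2 * k) := by
          simp only [ENNReal.tsum_mul_left, ENNReal.tsum_add, hshift, tsum_fintype, sum_const,
            card_univ, Fintype.card_prod, Fintype.card_fin, Fintype.card_bool, nsmul_eq_mul]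
          push_cast
          ring
  have hB : ∑' z, B z ^ (2 : ℝ) = ∑' x, ∑ y ∈ latNbrs x, ‖u y - u x‖ₑ ^ (2 : ℝ) := by
    rw [ENNReal.tsum_prod']
    simp only [B, sum_latNbrs, tsum_fintype]
  calc ∑' x, latGrad (fun z => |u z| ^ (k + 1)) x
      ≤ ∑' x, ∑ q, (k + 1) * (A (x, q) * B (x, q)) := by
        refine ENNReal.tsum_le_tsum fun x => ?_
        rw [latGrad, sum_latNbrs]
        gcongr with q
        rw [← mul_assoc]
        exact enorm_abs_pow_succ_sub_le _ _ k
    _ = (k + 1) * ∑' z, A z * B z := by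
        rw [ENNReal.tsum_prod', ← ENNReal.tsum_mul_left]
        simp only [tsum_fintype, mul_sum]
    _ ≤ (k + 1) * ((∑' z, A z ^ (2 : ℝ)) ^ (1 / 2 : ℝ) * (∑' z, B z ^ (2 : ℝ)) ^ (1 / 2 : ℝ)) := by
        gcongr
        exact ENNReal.inner_le_Lp_mul_Lq_tsum Real.HolderConjugate.two_two A B
    _ ≤ _ := by
        rw [hB, ← mul_assoc]
        gcongr

theorem tsum_enorm_rpow_le_of_tendsto_zero (hn : 2 ≤ n) (k : ℕ) {u : LV n → ℝ}
    (hu : Tendsto u cofinite (𝓝 0)) :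
    ∑' x, ‖u x‖ₑ ^ ((k + 1) * ((n : ℝ) / (n - 1))) ≤
      ((k + 1) * (8 * n * ∑' x, ‖u x‖ₑ ^ (2 * k)) ^ (1 / 2 : ℝ) *
        (∑' x, ∑ y ∈ latNbrs x, ‖u y - u x‖ₑ ^ (2 : ℝ)) ^ (1 / 2 : ℝ)) ^ ((n : ℝ) / (n - 1)) := by
  have hW : Tendsto (fun z => |u z| ^ (k + 1)) cofinite (𝓝 0) := by
    simpa using hu.abs.pow (k + 1)
  calc ∑' x, ‖u x‖ₑ ^ ((k + 1) * ((n : ℝ) / (n - 1)))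
      = ∑' x, ‖|u x| ^ (k + 1)‖ₑ ^ ((n : ℝ) / (n - 1)) := by
        simp_rw [enorm_pow, Real.enorm_abs, ENNReal.rpow_mul, ← ENNReal.rpow_natCast]
        push_cast
        rfl
    _ ≤ (∑' x, latGrad (fun z => |u z| ^ (k + 1)) x) ^ ((n : ℝ) / (n - 1)) :=
        tsum_enorm_rpow_le_tsum_latGrad_rpow hn hW
    _ ≤ _ := ENNReal.rpow_le_rpow (tsum_latGrad_abs_pow_le u k)
        (div_nonneg n.cast_nonneg (by linarith [show (2 : ℝ) ≤ n by exact_mod_cast hn]))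

end Lattice

section Norms

variable {n : ℕ}

/-- `lnorm` without the junk value `0` of a divergent `tsum`. -/
def elnorm (u : LV n → ℝ) (r : ℝ) : ℝ≥0∞ := (∑' x, ‖u x‖ₑ ^ r) ^ (1 / r)

def eSemiNorm1 (u : LV n → ℝ) (q : ℝ) : ℝ≥0∞ :=
  (∑' x, ∑ y ∈ latNbrs x, ‖u y - u x‖ₑ ^ q) ^ (1 / q)

lemma lnorm_nonneg (u : LV n → ℝ) (r : ℝ) : 0 ≤ lnorm u r :=
  Real.rpow_nonneg (tsum_nonneg fun _ => by positivity) _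

lemma semiNorm1_nonneg (u : LV n → ℝ) (q : ℝ) : 0 ≤ semiNorm1 u q :=
  Real.rpow_nonneg (tsum_nonneg fun _ => sum_nonneg fun _ _ => by positivity) _

lemma ofReal_lnorm {u : LV n → ℝ} {r : ℝ} (hr : 0 ≤ r) (hu : Summable fun x => |u x| ^ r) :
    ENNReal.ofReal (lnorm u r) = elnorm u r := by
  rw [lnorm, elnorm, ← ENNReal.ofReal_rpow_of_nonneg (tsum_nonneg fun _ => by positivity)
    (by positivity), ENNReal.ofReal_tsum_of_nonneg (fun _ => by positivity) hu]
  simp_rw [← ENNReal.ofReal_rpow_of_nonneg (abs_nonneg _) hr, Real.enorm_eq_ofReal_abs]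

lemma ofReal_semiNorm1 {u : LV n → ℝ} {q : ℝ} (hq : 0 ≤ q)
    (hu : Summable fun x => ∑ y ∈ latNbrs x, |u y - u x| ^ q) :
    ENNReal.ofReal (semiNorm1 u q) = eSemiNorm1 u q := by
  rw [semiNorm1, eSemiNorm1, ← ENNReal.ofReal_rpow_of_nonneg
    (tsum_nonneg fun _ => sum_nonneg fun _ _ => by positivity) (by positivity),
    ENNReal.ofReal_tsum_of_nonneg (fun _ => sum_nonneg fun _ _ => by positivity) hu]
  congr 1
  refine tsum_congr fun x => ?_
  rw [ENNReal.ofReal_sum_of_nonneg fun _ _ => by positivity]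
  simp_rw [← ENNReal.ofReal_rpow_of_nonneg (abs_nonneg _) hq, Real.enorm_eq_ofReal_abs]

lemma summable_sum_latNbrs_abs_sub_rpow_two {u : LV n → ℝ} (hu : Summable fun x => u x ^ 2) :
    Summable fun x => ∑ y ∈ latNbrs x, |u y - u x| ^ (2 : ℝ) := by
  simp_rw [Real.rpow_two, sq_abs, sum_latNbrs]
  refine summable_sum fun q _ => ?_
  refine Summable.of_nonneg_of_le (fun _ => sq_nonneg _) (fun x => ?_)
    ((((Equiv.addRight (latShift q)).summable_iff).2 hu).mul_left 2 |>.add (hu.mul_left 2))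
  simp only [Equiv.coe_addRight, Function.comp_apply]
  nlinarith [sq_nonneg (u (x + latShift q) + u x)]

lemma elnorm_le_elnorm_of_exponent_le (u : LV n → ℝ) {a b : ℝ} (ha : 0 < a) (hab : a ≤ b) :
    elnorm u b ≤ elnorm u a :=
  ENNReal.tsum_rpow_one_div_le_of_exponent_le _ ha hab

def gnsConst (n p : ℕ) : ℝ := ((2 * p + 2) * √(8 * n)) ^ (1 / (2 * p + 2) : ℝ)

lemma gnsConst_pos (n p : ℕ) (hn : 1 ≤ n) : 0 < gnsConst n p := by
  unfold gnsConst
  have : (0 : ℝ) < n := by exact_mod_cast hn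
  positivity

theorem elnorm_le_gnsConst_mul (hn : 2 ≤ n) (p : ℕ) {u : LV n → ℝ}
    (hu : Tendsto u cofinite (𝓝 0)) :
    elnorm u (2 * n * ((p : ℝ) + 1) / (n - 1)) ≤
      ENNReal.ofReal (gnsConst n p) * eSemiNorm1 u 2 ^ ((1 : ℝ) / (2 * (p : ℝ) + 2))
        * elnorm u (4 * (p : ℝ) + 2) ^ ((2 * (p : ℝ) + 1) / (2 * (p : ℝ) + 2)) := by
  have hn1 : (1 : ℝ) < n := by exact_mod_cast hn
  set m : ℝ := n / (n - 1)
  set r : ℝ := 2 * n * ((p : ℝ) + 1) / (n - 1)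
  set t : ℝ := 1 / (2 * (p : ℝ) + 2)
  have ht : 0 ≤ t := by positivity
  have hr0 : 0 < r := div_pos (by positivity) (by linarith)
  have hr : r = (((2 * p + 1 : ℕ) : ℝ) + 1) * m := by
    simp only [r, m]; push_cast; field_simp; ring
  have hmr : m * (1 / r) = t := by
    rw [hr]; have : 0 < m := div_pos (by linarith) (by linarith)
    simp only [t]; field_simp; push_cast; ring
  set S := ∑' x, ‖u x‖ₑ ^ (2 * (2 * p + 1))
  set E := ∑' x, ∑ y ∈ latNbrs x, ‖u y - u x‖ₑ ^ (2 : ℝ)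
  set c : ℝ≥0∞ := ((2 * p + 1 : ℕ) : ℝ≥0∞) + 1
  have hC : ENNReal.ofReal (gnsConst n p) = (c * (8 * n) ^ (1 / 2 : ℝ)) ^ t := by
    rw [gnsConst, ← ENNReal.ofReal_rpow_of_nonneg (by positivity) ht,
      ENNReal.ofReal_mul (by positivity), Real.sqrt_eq_rpow,
      ← ENNReal.ofReal_rpow_of_nonneg (by positivity) (by norm_num)]
    congr 3
    · simp only [c]; push_cast
      rw [ENNReal.ofReal_add (by positivity) zero_le_two]; simp; ring
    · simp
  have hE : eSemiNorm1 u 2 ^ t = (E ^ (1 / 2 : ℝ)) ^ t := rfl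
  have hS : elnorm u (4 * (p : ℝ) + 2) ^ ((2 * (p : ℝ) + 1) / (2 * (p : ℝ) + 2)) =
      (S ^ (1 / 2 : ℝ)) ^ t := by
    have hexp : (4 * (p : ℝ) + 2) = ((2 * (2 * p + 1) : ℕ) : ℝ) := by push_cast; ring
    rw [elnorm, hexp]
    simp_rw [ENNReal.rpow_natCast]
    rw [← hexp, ← ENNReal.rpow_mul, ← ENNReal.rpow_mul]
    congr 1
    simp only [t]
    field_simp
    ring
  have key : ∑' x, ‖u x‖ₑ ^ r ≤ (c * (8 * n * S) ^ (1 / 2 : ℝ) * E ^ (1 / 2 : ℝ)) ^ m := by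
    rw [hr]; exact tsum_enorm_rpow_le_of_tendsto_zero hn (2 * p + 1) hu
  rw [hC, hE, hS]
  calc elnorm u r ≤ ((c * (8 * n * S) ^ (1 / 2 : ℝ) * E ^ (1 / 2 : ℝ)) ^ m) ^ (1 / r) :=
        ENNReal.rpow_le_rpow key (by positivity)
    _ = _ := by
        rw [← ENNReal.rpow_mul, hmr, ENNReal.mul_rpow_of_nonneg _ _ (by norm_num : (0:ℝ) ≤ 1/2)]
        simp only [ENNReal.mul_rpow_of_nonneg _ _ ht]
        ring

end Norms

/-- For `n ≥ 2` and integer `p ≥ 0` there is a constant `C(n,p)` such that for all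
`u ∈ l²(ℤⁿ)`:
`‖u‖_{l^{4p+4}} ≤ ‖u‖_{l^{2n(p+1)/(n-1)}} ≤ C(n,p) |u|_{1,2}^{1/(2p+2)} ‖u‖_{l^{4p+2}}^{(2p+1)/(2p+2)}`. -/
theorem GNS_special_case (n : ℕ) (hn : 2 ≤ n) (p : ℕ) :
    ∃ C : ℝ, 0 < C ∧ ∀ u : LV n → ℝ, Summable (fun x => (u x) ^ 2) →
      lnorm u (4 * (p : ℝ) + 4) ≤ lnorm u (2 * n * ((p : ℝ) + 1) / (n - 1)) ∧
      lnorm u (2 * n * ((p : ℝ) + 1) / (n - 1))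
        ≤ C * semiNorm1 u 2 ^ ((1 : ℝ) / (2 * (p : ℝ) + 2))
            * lnorm u (4 * (p : ℝ) + 2) ^ ((2 * (p : ℝ) + 1) / (2 * (p : ℝ) + 2)) := by
  have hn2 : (2 : ℝ) ≤ n := by exact_mod_cast hn
  have hr2 : 2 ≤ 2 * n * ((p : ℝ) + 1) / (n - 1) := by
    rw [le_div_iff₀ (by linarith)]; nlinarith
  have hr4 : 2 * n * ((p : ℝ) + 1) / (n - 1) ≤ 4 * p + 4 := by
    rw [div_le_iff₀ (by linarith)]; nlinarith [mul_nonneg (sub_nonneg.2 hn2) p.cast_nonneg]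
  refine ⟨gnsConst n p, gnsConst_pos n p (by omega), fun u hu => ⟨?_, ?_⟩⟩
  · rw [← ENNReal.ofReal_le_ofReal_iff (lnorm_nonneg _ _),
      ofReal_lnorm (by linarith) (summable_abs_rpow_of_summable_sq hu (by linarith)),
      ofReal_lnorm (by linarith) (summable_abs_rpow_of_summable_sq hu hr2)]
    exact elnorm_le_elnorm_of_exponent_le u (by linarith) hr4
  · have hC := (gnsConst_pos n p (by omega)).le
    have hE := semiNorm1_nonneg u 2
    have hL := lnorm_nonneg u (4 * (p : ℝ) + 2)
    rw [← ENNReal.ofReal_le_ofReal_iff (by positivity), ENNReal.ofReal_mul (by positivity),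
      ENNReal.ofReal_mul hC,
      ← ENNReal.ofReal_rpow_of_nonneg hE (by positivity),
      ← ENNReal.ofReal_rpow_of_nonneg hL (by positivity),
      ofReal_lnorm (by linarith) (summable_abs_rpow_of_summable_sq hu hr2),
      ofReal_lnorm (by linarith) (summable_abs_rpow_of_summable_sq hu (by linarith)),
      ofReal_semiNorm1 zero_le_two (summable_sum_latNbrs_abs_sub_rpow_two hu)]
    exact elnorm_le_gnsConst_mul hn p (tendsto_cofinite_zero_of_summable_sq hu)
end
end

section
/- Let Ω₁ ⊂ Ω₂ ⊂ ℤⁿ be finite subsets both containing the points p₁,…,p_M, and let u_{Ω₁}, u_{Ω₂} be the maximal solutions of the Dirichlet problem Δu = λe^u(e^u−1)^{2p+1} + h with zero boundary values on Ω₁ and Ω₂ respectively. Then u_{Ω₂} ≤ u_{Ω₁} on Ω̄₁ (the maximal solutions decrease as the domain grows). -/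
open Finset

noncomputable section

/-! The maximal solution `u₁` dominates every subsolution of the `Ω₁`-problem that is
nonpositive on `∂Ω₁`. The solution `u₂` of the `Ω₂`-problem is such a subsolution: it solves
the equation on `Ω₁ ⊆ Ω₂`, and it is nonpositive on all of `Ω̄₂ ⊇ ∂Ω₁` by the maximum
principle, because the right-hand side of the equation is positive wherever `u₂ > 0`. -/

section Lattice

variable {n : ℕ}

theorem mem_latClosure {Ω : Finset (LV n)} {y : LV n} :
    y ∈ latClosure Ω ↔ y ∈ Ω ∨ ∃ x ∈ Ω, y ∈ latNbrs x := by
  simp only [latClosure, latBdry, mem_union, mem_sdiff, mem_biUnion]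
  tauto

theorem mem_latClosure_of_mem_latNbrs {Ω : Finset (LV n)} {x y : LV n}
    (hx : x ∈ Ω) (hy : y ∈ latNbrs x) : y ∈ latClosure Ω :=
  mem_latClosure.2 (Or.inr ⟨x, hx, hy⟩)

theorem latBdry_subset_latClosure (Ω : Finset (LV n)) : latBdry Ω ⊆ latClosure Ω :=
  subset_union_right

theorem latClosure_mono {Ω₁ Ω₂ : Finset (LV n)} (h : Ω₁ ⊆ Ω₂) :
    latClosure Ω₁ ⊆ latClosure Ω₂ := by
  intro y hy
  rcases mem_latClosure.1 hy with hy | ⟨x, hx, hyx⟩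
  · exact mem_latClosure.2 (Or.inl (h hy))
  · exact mem_latClosure_of_mem_latNbrs (h hx) hyx

theorem latLap_nonpos_of_forall_le {Ω : Finset (LV n)} {u : LV n → ℝ} {x : LV n}
    (hx : x ∈ Ω) (hmax : ∀ y ∈ latClosure Ω, u y ≤ u x) : latLap u x ≤ 0 :=
  sum_nonpos fun y hy => sub_nonpos.2 (hmax y (mem_latClosure_of_mem_latNbrs hx hy))

theorem nonpos_on_latClosure_of_latLap_pos {Ω : Finset (LV n)} {u : LV n → ℝ}
    (hbd : ∀ x ∈ latBdry Ω, u x ≤ 0) (hlap : ∀ x ∈ Ω, 0 < u x → 0 < latLap u x) :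
    ∀ x ∈ latClosure Ω, u x ≤ 0 := by
  by_contra! ⟨z, hz, hz_pos⟩
  obtain ⟨x, hx, hmax⟩ := exists_max_image (latClosure Ω) u ⟨z, hz⟩
  have hx_pos : 0 < u x := hz_pos.trans_le (hmax z hz)
  have hxΩ : x ∈ Ω := by
    rcases mem_union.1 hx with hxΩ | hx_bd
    · exact hxΩ
    · exact absurd (hbd x hx_bd) hx_pos.not_ge
  exact (hlap x hxΩ hx_pos).not_ge (latLap_nonpos_of_forall_le hxΩ hmax)

end Lattice

theorem chernH_nonneg {n M : ℕ} (nj : Fin M → ℕ) (pts : Fin M → LV n) (x : LV n) :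
    0 ≤ chernH nj pts x :=
  mul_nonneg (by positivity) (sum_nonneg fun j _ => by positivity)

theorem vortex_term_pos {lam t : ℝ} (hlam : 0 < lam) (ht : 0 < t) (p : ℕ) :
    0 < lam * Real.exp t * (Real.exp t - 1) ^ (2 * p + 1) := by
  have : 0 < Real.exp t - 1 := sub_pos.2 (Real.one_lt_exp_iff.2 ht)
  positivity

theorem maximal_solution_monotone_general (n : ℕ) (lam : ℝ) (hlam : 0 < lam) (p : ℕ)
    (M : ℕ) (nj : Fin M → ℕ) (pts : Fin M → LV n)
    (Ω₁ Ω₂ : Finset (LV n)) (hΩ : Ω₁ ⊆ Ω₂)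
    (u₁ u₂ : LV n → ℝ)
    (hmax₁ : ∀ U : LV n → ℝ,
      (∀ x ∈ Ω₁, lam * Real.exp (U x) * (Real.exp (U x) - 1) ^ (2 * p + 1) + chernH nj pts x
          ≤ latLap U x) →
      (∀ x ∈ latBdry Ω₁, U x ≤ 0) →
      ∀ x ∈ latClosure Ω₁, U x ≤ u₁ x)
    (hsol₂ : ∀ x ∈ Ω₂, latLap u₂ x
        = lam * Real.exp (u₂ x) * (Real.exp (u₂ x) - 1) ^ (2 * p + 1) + chernH nj pts x)
    (hbd₂ : ∀ x ∈ latBdry Ω₂, u₂ x = 0) :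
    ∀ x ∈ latClosure Ω₁, u₂ x ≤ u₁ x := by
  have hu₂_nonpos : ∀ x ∈ latClosure Ω₂, u₂ x ≤ 0 :=
    nonpos_on_latClosure_of_latLap_pos (fun x hx => (hbd₂ x hx).le) fun x hx hpos => by
      rw [hsol₂ x hx]
      exact add_pos_of_pos_of_nonneg (vortex_term_pos hlam hpos p) (chernH_nonneg nj pts x)
  refine hmax₁ u₂ (fun x hx => (hsol₂ x (hΩ hx)).ge) fun x hx => hu₂_nonpos x ?_
  exact latClosure_mono hΩ (latBdry_subset_latClosure Ω₁ hx)

/-- Domain monotonicity of the maximal solutions: if `Ω₁ ⊆ Ω₂` are finite subsets of `ℤⁿ`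
containing the points `p_j`, and `u₁`, `u₂` are the maximal solutions of the Dirichlet
problem `Δu = λe^u(e^u-1)^{2p+1} + h` with zero boundary values on `Ω₁` and `Ω₂`
respectively, then `u₂ ≤ u₁` on `Ω̄₁`. -/
theorem maximal_solution_monotone (n : ℕ) (hn : 2 ≤ n) (lam : ℝ) (hlam : 0 < lam) (p : ℕ)
    (M : ℕ) (nj : Fin M → ℕ) (hnj : ∀ j, 0 < nj j) (pts : Fin M → LV n)
    (Ω₁ Ω₂ : Finset (LV n)) (hΩ : Ω₁ ⊆ Ω₂)
    (hpts₁ : ∀ j, pts j ∈ Ω₁) (hpts₂ : ∀ j, pts j ∈ Ω₂)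
    (u₁ u₂ : LV n → ℝ)
    (hsol₁ : ∀ x ∈ Ω₁, latLap u₁ x
        = lam * Real.exp (u₁ x) * (Real.exp (u₁ x) - 1) ^ (2 * p + 1) + chernH nj pts x)
    (hbd₁ : ∀ x ∈ latBdry Ω₁, u₁ x = 0)
    (hmax₁ : ∀ U : LV n → ℝ,
      (∀ x ∈ Ω₁, lam * Real.exp (U x) * (Real.exp (U x) - 1) ^ (2 * p + 1) + chernH nj pts x
          ≤ latLap U x) →
      (∀ x ∈ latBdry Ω₁, U x ≤ 0) →
      ∀ x ∈ latClosure Ω₁, U x ≤ u₁ x)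
    (hsol₂ : ∀ x ∈ Ω₂, latLap u₂ x
        = lam * Real.exp (u₂ x) * (Real.exp (u₂ x) - 1) ^ (2 * p + 1) + chernH nj pts x)
    (hbd₂ : ∀ x ∈ latBdry Ω₂, u₂ x = 0)
    (hmax₂ : ∀ U : LV n → ℝ,
      (∀ x ∈ Ω₂, lam * Real.exp (U x) * (Real.exp (U x) - 1) ^ (2 * p + 1) + chernH nj pts x
          ≤ latLap U x) →
      (∀ x ∈ latBdry Ω₂, U x ≤ 0) →
      ∀ x ∈ latClosure Ω₂, U x ≤ u₂ x) :
    ∀ x ∈ latClosure Ω₁, u₂ x ≤ u₁ x :=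
  maximal_solution_monotone_general n lam hlam p M nj pts Ω₁ Ω₂ hΩ u₁ u₂ hmax₁ hsol₂ hbd₂
end
end
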